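/- arXiv:2208.00990 — 7 statements merged into one kernel-verified Lean document; each statement's English description precedes it below -/
import Mathlib

section
/- Let $\Lambda_1,\dots,\Lambda_d$ be $(k-1)$-dimensional linear subspaces of $\mathbb{P}^n$ in special position with respect to $(n-k)$-planes. If $\Lambda_1,\dots,\Lambda_{d-1}$ are all contained in a linear subspace $S\subseteq\mathbb{P}^n$, then $\Lambda_d\subseteq S$ as well. -/
/-- `Λ₁,…` (indexed by the finite set `s`) are linear subspaces of `ℙ(V)` in special position
with respect to `c`-planes: every projective `c`-plane (i.e. vector subspace `L` with
`finrank L = c + 1`) meeting all members but one also meets the remaining one.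
Projective subspaces of `ℙ(V)` are modeled as vector subspaces of `V`; two projective
subspaces meet iff the corresponding vector subspaces have nonzero intersection. -/
def SP {V : Type*} [AddCommGroup V] [Module ℂ V]
    (c : ℕ) (s : Finset ℕ) (Λ : ℕ → Submodule ℂ V) : Prop :=
  ∀ j ∈ s, ∀ L : Submodule ℂ V, Module.finrank ℂ L = c + 1 →
    (∀ i ∈ s, i ≠ j → L ⊓ Λ i ≠ ⊥) → L ⊓ Λ j ≠ ⊥

open Module Submodule in
/-- If `Λ₁,…,Λ_d ⊂ ℙⁿ` are `(k-1)`-planes in special position with respect to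
`(n-k)`-planes and `Λ₁,…,Λ_{d-1}` are contained in a linear subspace `S`, then `Λ_d ⊆ S`. -/
theorem sp_last_mem_span {V : Type*} [AddCommGroup V] [Module ℂ V] [FiniteDimensional ℂ V]
    (n k d : ℕ) (hk : 1 ≤ k) (hkn : k ≤ n) (hd : 2 ≤ d)
    (hV : Module.finrank ℂ V = n + 1)
    (Λ : ℕ → Submodule ℂ V)
    (hdim : ∀ i ∈ Finset.Icc 1 d, Module.finrank ℂ (Λ i) = k)
    (hSP : SP (n - k) (Finset.Icc 1 d) Λ)
    (S : Submodule ℂ V)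
    (hS : ∀ i ∈ Finset.Icc 1 (d - 1), Λ i ≤ S) :
    Λ d ≤ S := by
  by_contra hcon
  obtain ⟨v, hvΛ, hvS⟩ := SetLike.not_le_iff_exists.mp hcon
  have hd1 : (1:ℕ) ≤ d := le_trans one_le_two hd
  have hdmem : d ∈ Finset.Icc 1 d := Finset.mem_Icc.mpr ⟨hd1, le_refl d⟩
  -- hyperplane H containing S, missing v
  obtain ⟨f, hfv, hfS⟩ := S.exists_dual_map_eq_bot_of_notMem hvS inferInstance
  set H := LinearMap.ker f with hHdef
  have hSH : S ≤ H := fun x hx => by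
    have hx' : f x ∈ S.map f := Submodule.mem_map_of_mem hx
    rw [hfS] at hx'
    simpa [hHdef] using hx'
  have hvH : v ∉ H := by simpa [hHdef] using hfv
  -- finrank H = n
  have hfne : f ≠ 0 := fun h => hfv (by simp [h])
  have hrange : finrank ℂ (LinearMap.range f) = 1 := by
    refine le_antisymm ?_ ?_
    · simpa using (LinearMap.range f).finrank_le
    · refine Submodule.one_le_finrank_iff.mpr (fun h => hfv ?_)
      have : f v ∈ LinearMap.range f := LinearMap.mem_range_self f v
      rw [h] at this; simpa using this
  have hHrank : finrank ℂ H = n := by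
    have h2 := LinearMap.finrank_range_add_finrank_ker f
    rw [hrange, hV, ← hHdef] at h2
    omega
  -- finrank (Λ d ⊓ H) = k - 1
  have hΛd : finrank ℂ (Λ d) = k := hdim d hdmem
  have hsup : Λ d ⊔ H = ⊤ := by
    have hlt : H < Λ d ⊔ H := lt_of_le_of_ne le_sup_right
      (fun h => hvH (h ▸ (le_sup_left : Λ d ≤ Λ d ⊔ H) hvΛ))
    have h1 : n < finrank ℂ ↥(Λ d ⊔ H) := hHrank ▸ Submodule.finrank_lt_finrank_of_lt hlt
    have h2 : finrank ℂ ↥(Λ d ⊔ H) ≤ n + 1 := hV ▸ Submodule.finrank_le _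
    exact Submodule.eq_top_of_finrank_eq (by rw [hV]; omega)
  have hinfrank : finrank ℂ ↥(Λ d ⊓ H) = k - 1 := by
    have := Submodule.finrank_sup_add_finrank_inf_eq (Λ d) H
    rw [hsup, finrank_top, hV, hΛd, hHrank] at this
    omega
  -- complement L of (Λ d ⊓ H) inside H
  obtain ⟨L', hL'⟩ := Submodule.exists_isCompl ((Λ d ⊓ H).comap H.subtype)
  set L : Submodule ℂ V := L'.map H.subtype with hLdef
  have hLH : L ≤ H := by
    rw [hLdef]; rintro x ⟨y, _, rfl⟩; exact y.2
  have hcomaprank : finrank ℂ ↥((Λ d ⊓ H).comap H.subtype) = k - 1 := by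
    rw [← hinfrank]
    apply LinearEquiv.finrank_eq
    exact Submodule.comapSubtypeEquivOfLe inf_le_right
  have hLrank : finrank ℂ L = n - k + 1 := by
    have h1 : finrank ℂ L' = n - (k - 1) := by
      have := Submodule.finrank_add_eq_of_isCompl hL'
      rw [hcomaprank, hHrank] at this
      omega
    have h2 : finrank ℂ L = finrank ℂ L' :=
      (LinearEquiv.finrank_eq (Submodule.equivMapOfInjective _ H.injective_subtype L')).symm
    rw [h2, h1]; omega
  -- L meets every Λ i, i ≤ d-1
  have hmeets : ∀ i ∈ Finset.Icc 1 d, i ≠ d → L ⊓ Λ i ≠ ⊥ := by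
    intro i hi hne
    have hi' : i ∈ Finset.Icc 1 (d-1) := by
      simp only [Finset.mem_Icc] at hi ⊢; omega
    have hΛiH : Λ i ≤ H := le_trans (hS i hi') hSH
    have hΛi : finrank ℂ (Λ i) = k := hdim i hi
    intro hbot
    have hsub : L ⊔ Λ i ≤ H := sup_le hLH hΛiH
    have h1 : finrank ℂ ↥(L ⊔ Λ i) ≤ n := hHrank ▸ Submodule.finrank_mono hsub
    have h2 := Submodule.finrank_sup_add_finrank_inf_eq L (Λ i)
    rw [hbot, hLrank, hΛi, finrank_bot] at h2
    omega
  -- L does not meet Λ d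
  have hdis : L ⊓ Λ d = ⊥ := by
    have h1 : L ⊓ Λ d = L ⊓ (Λ d ⊓ H) := le_antisymm
      (le_inf inf_le_left (le_inf inf_le_right (inf_le_left.trans hLH)))
      (le_inf inf_le_left (inf_le_right.trans inf_le_left))
    have h2 : ((Λ d ⊓ H).comap H.subtype).map H.subtype = Λ d ⊓ H := by
      rw [Submodule.map_comap_eq, Submodule.range_subtype]
      exact inf_eq_right.mpr inf_le_right
    rw [h1, ← h2, hLdef, ← Submodule.map_inf _ H.injective_subtype,
      hL'.disjoint.symm.eq_bot, Submodule.map_bot]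
  exact hSP d hdmem L hLrank hmeets hdis
end

section
/- Let $\Lambda_1,\dots,\Lambda_d\subset\mathbb{P}^n$ be $(k-1)$-planes satisfying $\mathrm{SP}(n-k)$, let $1\le r\le d-2$, and let $p_{r+1}\in\Lambda_{r+1},\dots,p_{d-1}\in\Lambda_{d-1}$ be points such that the linear span $\mathrm{Span}(p_{r+1},\dots,p_{d-1})$ is disjoint from $\Lambda_d$. Then $\Lambda_d\subseteq\mathrm{Span}(\Lambda_1,\dots,\Lambda_r,p_{r+1},\dots,p_{d-1})$. -/
open Module

namespace Submodule

variable {K V : Type*} [DivisionRing K] [AddCommGroup V] [Module K V] [FiniteDimensional K V]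
  {Y L M : Submodule K V}

lemma exists_mem_notMem_sup_of_finrank_eq (hYM : Disjoint Y M) (hYL : Disjoint Y L)
    (hLM : finrank K L = finrank K M) (hM : ¬ M ≤ Y ⊔ L) : ∃ x ∈ L, x ∉ Y ⊔ M := by
  by_contra! hL
  have hle : Y ⊔ L ≤ Y ⊔ M := sup_le le_sup_left fun x hx => hL x hx
  have hYLM : Y ⊔ L = Y ⊔ M := by
    refine eq_of_le_of_finrank_eq hle ?_
    have hYL' := finrank_sup_add_finrank_inf_eq Y L
    have hYM' := finrank_sup_add_finrank_inf_eq Y M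
    rw [hYL.eq_bot, finrank_bot] at hYL'
    rw [hYM.eq_bot, finrank_bot] at hYM'
    omega
  exact hM (hYLM ▸ le_sup_right)

lemma exists_disjoint_not_disjoint_of_not_le_sup (hYM : Disjoint Y M)
    (hLM : finrank K L = finrank K M) (hM : ¬ M ≤ Y ⊔ L) :
    ∃ Y', Y ≤ Y' ∧ Y' ≤ Y ⊔ L ∧ Disjoint Y' M ∧ ¬ Disjoint Y' L := by
  by_cases hYL : Disjoint Y L
  swap
  · exact ⟨Y, le_rfl, le_sup_left, hYM, hYL⟩
  obtain ⟨x, hxL, hx⟩ := exists_mem_notMem_sup_of_finrank_eq hYM hYL hLM hM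
  have hx0 : x ≠ 0 := fun h => hx (h ▸ zero_mem _)
  refine ⟨Y ⊔ K ∙ x, le_sup_left, sup_le_sup_left ((span_singleton_le_iff_mem _ _).2 hxL) Y,
    ?_, fun h => hx0 ?_⟩
  · rw [sup_comm]
    exact hYM.disjoint_sup_left_of_disjoint_sup_right (disjoint_span_singleton_of_notMem hx).symm
  · exact disjoint_def.1 h x (mem_sup_right (mem_span_singleton_self x)) hxL

lemma exists_disjoint_forall_not_disjoint_of_not_le_biSup {ι : Type*} (s : Finset ι)
    (Λ : ι → Submodule K V) (hYM : Disjoint Y M) (hdim : ∀ i ∈ s, finrank K (Λ i) = finrank K M)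
    (hM : ¬ M ≤ (⨆ i ∈ s, Λ i) ⊔ Y) :
    ∃ Y', Y ≤ Y' ∧ Y' ≤ (⨆ i ∈ s, Λ i) ⊔ Y ∧ Disjoint Y' M ∧ ∀ i ∈ s, ¬ Disjoint Y' (Λ i) := by
  classical
  induction s using Finset.induction_on with
  | empty => exact ⟨Y, le_rfl, le_sup_right, hYM, by simp⟩
  | insert a s _ ih =>
    rw [Finset.iSup_insert] at hM ⊢
    have hle : (⨆ i ∈ s, Λ i) ⊔ Y ≤ (Λ a ⊔ ⨆ i ∈ s, Λ i) ⊔ Y :=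
      sup_le_sup_right le_sup_right Y
    obtain ⟨Y₁, hYY₁, hY₁, hY₁M, hY₁s⟩ :=
      ih (fun i hi => hdim i (Finset.mem_insert_of_mem hi)) fun h => hM (h.trans hle)
    have hY₁a : Y₁ ⊔ Λ a ≤ (Λ a ⊔ ⨆ i ∈ s, Λ i) ⊔ Y :=
      sup_le (hY₁.trans hle) (le_sup_left.trans le_sup_left)
    obtain ⟨Y₂, hY₁Y₂, hY₂, hY₂M, hY₂a⟩ := exists_disjoint_not_disjoint_of_not_le_sup hY₁M
      (hdim a (Finset.mem_insert_self a s)) fun h => hM (h.trans hY₁a)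
    refine ⟨Y₂, hYY₁.trans hY₁Y₂, hY₂.trans hY₁a, hY₂M, ?_⟩
    simp only [Finset.mem_insert, forall_eq_or_imp]
    exact ⟨hY₂a, fun i hi h => hY₁s i hi (h.mono_left hY₁Y₂)⟩

end Submodule

open Submodule in
theorem sp_span_points_general {V : Type*} [AddCommGroup V] [Module ℂ V] [FiniteDimensional ℂ V]
    (n k d r : ℕ) (hkn : k ≤ n) (hrd : r + 2 ≤ d)
    (hV : Module.finrank ℂ V = n + 1)
    (Λ : ℕ → Submodule ℂ V)
    (hdim : ∀ i ∈ Finset.Icc 1 d, Module.finrank ℂ (Λ i) = k)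
    (hSP : SP (n - k) (Finset.Icc 1 d) Λ)
    (p : ℕ → V)
    (hp0 : ∀ i ∈ Finset.Icc (r + 1) (d - 1), p i ≠ 0)
    (hp : ∀ i ∈ Finset.Icc (r + 1) (d - 1), p i ∈ Λ i)
    (hdisj : Submodule.span ℂ (p '' Set.Icc (r + 1) (d - 1)) ⊓ Λ d = ⊥) :
    Λ d ≤ (⨆ i ∈ Finset.Icc 1 r, Λ i) ⊔ Submodule.span ℂ (p '' Set.Icc (r + 1) (d - 1)) := by
  have hd : d ∈ Finset.Icc 1 d := Finset.mem_Icc.2 ⟨by omega, le_rfl⟩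
  by_contra hW
  obtain ⟨Y, hUY, -, hYd, hYΛ⟩ := exists_disjoint_forall_not_disjoint_of_not_le_biSup
    (Finset.Icc 1 r) Λ (disjoint_iff.2 hdisj)
    (fun i hi => by rw [hdim i (by simp only [Finset.mem_Icc] at hi ⊢; omega), hdim d hd]) hW
  obtain ⟨C, hYC, hC⟩ := hYd.exists_isCompl
  have hCdim : finrank ℂ C = n - k + 1 := by
    have := finrank_add_eq_of_isCompl hC
    rw [hV, hdim d hd] at this
    omega
  refine hSP d hd C hCdim (fun i hi hid => ?_) hC.disjoint.eq_bot
  rw [Ne, ← disjoint_iff]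
  by_cases hir : i ≤ r
  · exact fun h => hYΛ i (Finset.mem_Icc.2 ⟨(Finset.mem_Icc.1 hi).1, hir⟩) (h.mono_left hYC)
  · have hi' : i ∈ Finset.Icc (r + 1) (d - 1) := by simp only [Finset.mem_Icc] at hi ⊢; omega
    have hpC : p i ∈ C := hYC (hUY (subset_span (Set.mem_image_of_mem p (by simpa using hi'))))
    exact fun h => hp0 i hi' (disjoint_def.1 h _ hpC (hp i hi'))

/-- Let `Λ₁,…,Λ_d ⊂ ℙⁿ` be `(k-1)`-planes satisfying `SP(n-k)`, let `1 ≤ r ≤ d-2`, and let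
`p_{r+1} ∈ Λ_{r+1}, …, p_{d-1} ∈ Λ_{d-1}` be points whose linear span is disjoint from `Λ_d`.
Then `Λ_d ⊆ Span(Λ₁,…,Λ_r, p_{r+1},…,p_{d-1})`. -/
theorem sp_span_points {V : Type*} [AddCommGroup V] [Module ℂ V] [FiniteDimensional ℂ V]
    (n k d r : ℕ) (hk : 1 ≤ k) (hkn : k ≤ n) (hr : 1 ≤ r) (hrd : r + 2 ≤ d)
    (hV : Module.finrank ℂ V = n + 1)
    (Λ : ℕ → Submodule ℂ V)
    (hdim : ∀ i ∈ Finset.Icc 1 d, Module.finrank ℂ (Λ i) = k)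
    (hSP : SP (n - k) (Finset.Icc 1 d) Λ)
    (p : ℕ → V)
    (hp0 : ∀ i ∈ Finset.Icc (r + 1) (d - 1), p i ≠ 0)
    (hp : ∀ i ∈ Finset.Icc (r + 1) (d - 1), p i ∈ Λ i)
    (hdisj : Submodule.span ℂ (p '' Set.Icc (r + 1) (d - 1)) ⊓ Λ d = ⊥) :
    Λ d ≤ (⨆ i ∈ Finset.Icc 1 r, Λ i) ⊔ Submodule.span ℂ (p '' Set.Icc (r + 1) (d - 1)) :=
  sp_span_points_general n k d r hkn hrd hV Λ hdim hSP p hp0 hp hdisj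
end

section
/- Let $\Lambda_1,\dots,\Lambda_d\subset\mathbb{P}^n$ be $(k-1)$-planes satisfying $\mathrm{SP}(n-k)$, and let $2\le r\le d-1$ be such that $\Lambda_{r+1},\dots,\Lambda_d$ do not satisfy $\mathrm{SP}(n-k)$. Then $\dim\big(\mathrm{Span}(\Lambda_1,\dots,\Lambda_r)\cap\mathrm{Span}(\Lambda_{r+1},\dots,\Lambda_d)\big)\ge k-1$. -/
/-- Let `Λ₁,…,Λ_d ⊂ ℙⁿ` be `(k-1)`-planes satisfying `SP(n-k)`, and let `2 ≤ r ≤ d-1` be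
such that `Λ_{r+1},…,Λ_d` do not satisfy `SP(n-k)`. Then the intersection
`Span(Λ₁,…,Λ_r) ∩ Span(Λ_{r+1},…,Λ_d)` has projective dimension at least `k-1`
(equivalently, the corresponding vector space has dimension at least `k`). -/
theorem sp_inter_span {V : Type*} [AddCommGroup V] [Module ℂ V] [FiniteDimensional ℂ V]
    (n k d r : ℕ) (hk : 1 ≤ k) (hkn : k ≤ n) (hr : 2 ≤ r) (hrd : r + 1 ≤ d)
    (hV : Module.finrank ℂ V = n + 1)
    (Λ : ℕ → Submodule ℂ V)
    (hdim : ∀ i ∈ Finset.Icc 1 d, Module.finrank ℂ (Λ i) = k)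
    (hSP : SP (n - k) (Finset.Icc 1 d) Λ)
    (hnSP : ¬ SP (n - k) (Finset.Icc (r + 1) d) Λ) :
    k ≤ Module.finrank ℂ
      ↥((⨆ i ∈ Finset.Icc 1 r, Λ i) ⊓ (⨆ i ∈ Finset.Icc (r + 1) d, Λ i)) := by
  classical
  set A := ⨆ i ∈ Finset.Icc 1 r, Λ i with hA
  set B := ⨆ i ∈ Finset.Icc (r + 1) d, Λ i with hB
  -- extract witness from hnSP
  unfold SP at hnSP
  push_neg at hnSP
  obtain ⟨j, hjs, L₀, hL₀dim, hL₀meet, hL₀j⟩ := hnSP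
  have hjr : r + 1 ≤ j ∧ j ≤ d := Finset.mem_Icc.mp hjs
  have hj1d : j ∈ Finset.Icc 1 d := Finset.mem_Icc.mpr ⟨by omega, hjr.2⟩
  set s' : Finset ℕ := (Finset.Icc (r + 1) d).erase j with hs'
  -- property P
  set P : Finset ℕ → Prop := fun T =>
    ∃ L : Submodule ℂ V, Module.finrank ℂ L = (n - k) + 1 ∧ L ⊓ Λ j = ⊥ ∧
      (∀ i ∈ s' ∪ T, L ⊓ Λ i ≠ ⊥) with hP
  have hP0 : P ∅ := by
    refine ⟨L₀, hL₀dim, hL₀j, ?_⟩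
    intro i hi
    simp only [Finset.union_empty, hs', Finset.mem_erase] at hi
    exact hL₀meet i hi.2 hi.1
  set 𝒮 : Finset (Finset ℕ) := (Finset.Icc 1 r).powerset.filter P with h𝒮
  have h𝒮ne : 𝒮.Nonempty := ⟨∅, by simp [h𝒮, hP0]⟩
  obtain ⟨T, hT𝒮, hTmax⟩ := Finset.exists_max_image 𝒮 Finset.card h𝒮ne
  rw [h𝒮, Finset.mem_filter, Finset.mem_powerset] at hT𝒮
  obtain ⟨hTsub, L, hLdim, hLj, hLmeet⟩ := hT𝒮
  -- maximality helper
  have hmaxins : ∀ i0 ∈ Finset.Icc 1 r, i0 ∉ T → ¬ P (insert i0 T) := by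
    intro i0 hi0 hi0T hPi
    have hmem : insert i0 T ∈ 𝒮 := by
      rw [h𝒮, Finset.mem_filter, Finset.mem_powerset]
      exact ⟨Finset.insert_subset hi0 hTsub, hPi⟩
    have := hTmax _ hmem
    rw [Finset.card_insert_of_notMem hi0T] at this
    omega
  -- T ≠ Icc 1 r : find i0
  have hex_i0 : ∃ i0 ∈ Finset.Icc 1 r, i0 ∉ T := by
    by_contra h
    push_neg at h
    have hTeq : Finset.Icc 1 r ⊆ T := h
    have : L ⊓ Λ j ≠ ⊥ := by
      refine hSP j hj1d L hLdim ?_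
      intro i hi hij
      rcases Finset.mem_Icc.mp hi with ⟨h1, h2⟩
      by_cases hir : i ≤ r
      · exact hLmeet i (Finset.mem_union_right _ (hTeq (Finset.mem_Icc.mpr ⟨h1, hir⟩)))
      · exact hLmeet i (Finset.mem_union_left _ (Finset.mem_erase.mpr
          ⟨hij, Finset.mem_Icc.mpr ⟨by omega, h2⟩⟩))
    exact this hLj
  obtain ⟨i0, hi0r, hi0T⟩ := hex_i0
  have hi0d : i0 ∈ Finset.Icc 1 d := by
    rcases Finset.mem_Icc.mp hi0r with ⟨h1, h2⟩
    exact Finset.mem_Icc.mpr ⟨h1, by omega⟩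
  -- L ⊓ Λ i0 = ⊥
  have hLi0 : L ⊓ Λ i0 = ⊥ := by
    by_contra hne
    exact hmaxins i0 hi0r hi0T ⟨L, hLdim, hLj, by
      intro i hi
      rcases Finset.mem_union.mp hi with h | h
      · exact hLmeet i (Finset.mem_union_left _ h)
      · rcases Finset.mem_insert.mp h with rfl | h
        · exact hne
        · exact hLmeet i (Finset.mem_union_right _ h)⟩
  -- choose nonzero vectors
  have hex : ∀ i ∈ s' ∪ T, ∃ x, x ∈ L ⊓ Λ i ∧ x ≠ 0 := by
    intro i hi
    exact (Submodule.ne_bot_iff _).mp (hLmeet i hi)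
  choose! v hv using hex
  set KA : Submodule ℂ V := Submodule.span ℂ (T.image v : Set V) with hKA
  set KB : Submodule ℂ V := Submodule.span ℂ (s'.image v : Set V) with hKB
  set K : Submodule ℂ V := KA ⊔ KB with hK
  have hvmemK : ∀ i ∈ s' ∪ T, v i ∈ K := by
    intro i hi
    rcases Finset.mem_union.mp hi with h | h
    · exact Submodule.mem_sup_right (Submodule.subset_span (by
        simp only [Finset.coe_image, Set.mem_image]; exact ⟨i, h, rfl⟩))
    · exact Submodule.mem_sup_left (Submodule.subset_span (by
        simp only [Finset.coe_image, Set.mem_image]; exact ⟨i, h, rfl⟩))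
  have hvL : ∀ i ∈ s' ∪ T, v i ∈ L := fun i hi => ((hv i hi).1).1
  have hKL : K ≤ L := by
    refine sup_le ?_ ?_ <;>
    · refine Submodule.span_le.mpr ?_
      intro x hx
      simp only [Finset.coe_image, Set.mem_image, Finset.mem_coe] at hx
      obtain ⟨i, hi, rfl⟩ := hx
      first
        | exact hvL i (Finset.mem_union_right _ hi)
        | exact hvL i (Finset.mem_union_left _ hi)
  -- L ⊔ Λ j = ⊤
  have hdimj : Module.finrank ℂ (Λ j) = k := hdim j hj1d
  have hTop : L ⊔ Λ j = ⊤ := by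
    apply Submodule.eq_top_of_finrank_eq
    have := Submodule.finrank_sup_add_finrank_inf_eq L (Λ j)
    rw [hLj] at this
    simp only [finrank_bot] at this
    rw [hLdim, hdimj] at this
    rw [hV]
    omega
  -- main dichotomy
  by_cases hsub : Λ i0 ≤ K ⊔ Λ j
  · -- conclusion branch
    have hKAA : KA ≤ A := by
      rw [hKA]
      refine Submodule.span_le.mpr ?_
      intro x hx
      simp only [Finset.coe_image, Set.mem_image, Finset.mem_coe] at hx
      obtain ⟨i, hi, rfl⟩ := hx
      exact (le_biSup Λ (hTsub hi) : Λ i ≤ A) ((hv i (Finset.mem_union_right _ hi)).1).2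
    have hKBB : KB ⊔ Λ j ≤ B := by
      refine sup_le ?_ (le_biSup Λ hjs)
      rw [hKB]
      refine Submodule.span_le.mpr ?_
      intro x hx
      simp only [Finset.coe_image, Set.mem_image, Finset.mem_coe] at hx
      obtain ⟨i, hi, rfl⟩ := hx
      exact (le_biSup Λ (Finset.mem_of_mem_erase hi) : Λ i ≤ B)
        ((hv i (Finset.mem_union_left _ hi)).1).2
    have hi0A : Λ i0 ≤ A := le_biSup Λ hi0r
    have hmain : Λ i0 ≤ KA ⊔ (A ⊓ B) := by
      intro u hu
      have : u ∈ KA ⊔ (KB ⊔ Λ j) := by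
        rw [hK] at hsub
        rw [sup_assoc] at hsub
        exact hsub hu
      obtain ⟨a, ha, b, hb, hab⟩ := Submodule.mem_sup.mp this
      refine Submodule.mem_sup.mpr ⟨a, ha, b, ?_, hab⟩
      refine Submodule.mem_inf.mpr ⟨?_, hKBB hb⟩
      have : b = u - a := by rw [← hab]; abel
      rw [this]
      exact Submodule.sub_mem A (hi0A hu) (hKAA ha)
    have hdisj : Λ i0 ⊓ KA = ⊥ := by
      rw [eq_bot_iff]
      intro x hx
      have : x ∈ L ⊓ Λ i0 := Submodule.mem_inf.mpr
        ⟨hKL (Submodule.mem_sup_left hx.2), hx.1⟩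
      rw [hLi0] at this
      exact this
    -- dimension count
    have h1 := Submodule.finrank_sup_add_finrank_inf_eq (Λ i0) KA
    rw [hdisj] at h1
    simp only [finrank_bot] at h1
    have h2 : Module.finrank ℂ ↥(Λ i0 ⊔ KA) ≤ Module.finrank ℂ ↥(KA ⊔ (A ⊓ B)) :=
      Submodule.finrank_mono (sup_le hmain le_sup_left)
    have h3 := Submodule.finrank_sup_add_finrank_inf_eq KA (A ⊓ B)
    have h4 := hdim i0 hi0d
    omega
  · -- contradiction branch : construct a better L
    exfalso
    obtain ⟨u₀, hu₀Λ, hu₀N⟩ := SetLike.not_le_iff_exists.mp hsub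
    set N : Submodule ℂ V := K ⊔ Λ j with hN
    obtain ⟨x₀, hx₀L, y₀, hy₀, hxy⟩ := Submodule.mem_sup.mp
      (by rw [hTop]; exact Submodule.mem_top : u₀ ∈ L ⊔ Λ j)
    have hy₀N : y₀ ∈ N := Submodule.mem_sup_right hy₀
    have hx₀N : x₀ ∉ N := by
      intro h
      exact hu₀N (by rw [← hxy]; exact Submodule.add_mem N h hy₀N)
    -- functional f
    have hfex : ∃ f : V →ₗ[ℂ] ℂ, f x₀ = 1 ∧ ∀ z ∈ N, f z = 0 := by
      have hπ : N.mkQ x₀ ≠ 0 := by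
        simp only [Submodule.mkQ_apply, ne_eq, Submodule.Quotient.mk_eq_zero]
        exact hx₀N
      have : ∃ g : Module.Dual ℂ (V ⧸ N), g (N.mkQ x₀) ≠ 0 := by
        by_contra h
        push_neg at h
        exact hπ ((Module.forall_dual_apply_eq_zero_iff ℂ _).mp h)
      obtain ⟨g, hg⟩ := this
      refine ⟨(g (N.mkQ x₀))⁻¹ • (g ∘ₗ N.mkQ), ?_, ?_⟩
      · simp only [LinearMap.smul_apply, LinearMap.coe_comp, Function.comp_apply, smul_eq_mul]
        exact inv_mul_cancel₀ hg
      · intro z hz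
        simp only [LinearMap.smul_apply, LinearMap.coe_comp, Function.comp_apply,
          Submodule.mkQ_apply, smul_eq_mul]
        rw [(Submodule.Quotient.mk_eq_zero N).mpr hz]
        simp
    obtain ⟨f, hfx₀, hfN⟩ := hfex
    have hfy₀ : f y₀ = 0 := hfN y₀ hy₀N
    set ψ : V →ₗ[ℂ] V := LinearMap.id + f.smulRight y₀ with hψ
    have hψapp : ∀ z, ψ z = z + f z • y₀ := by
      intro z
      simp [hψ, LinearMap.add_apply, LinearMap.smulRight_apply]
    have hψinj : Function.Injective ψ := by
      rw [← LinearMap.ker_eq_bot, eq_bot_iff]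
      intro z hz
      have hz0 : z + f z • y₀ = 0 := by rw [← hψapp]; exact hz
      have hfz : f z = 0 := by
        have := congrArg f hz0
        simp only [map_add, map_smul, hfy₀, smul_eq_mul, mul_zero, add_zero, map_zero] at this
        exact this
      simp only [Submodule.mem_bot]
      rw [hfz, zero_smul, add_zero] at hz0
      exact hz0
    set L' : Submodule ℂ V := L.map ψ with hL'
    have hL'dim : Module.finrank ℂ L' = (n - k) + 1 := by
      rw [← (Submodule.equivMapOfInjective ψ hψinj L).finrank_eq]
      exact hLdim
    have hψfix : ∀ i ∈ s' ∪ T, ψ (v i) = v i := by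
      intro i hi
      rw [hψapp, hfN (v i) (Submodule.mem_sup_left (hvmemK i hi)), zero_smul, add_zero]
    have hL'j : L' ⊓ Λ j = ⊥ := by
      rw [eq_bot_iff]
      intro z hz
      obtain ⟨hz1, hz2⟩ := Submodule.mem_inf.mp hz
      obtain ⟨x, hxL, hxz⟩ := Submodule.mem_map.mp hz1
      have hxj : x ∈ Λ j := by
        have : x = z - f x • y₀ := by rw [← hxz, hψapp]; abel
        rw [this]
        exact Submodule.sub_mem _ hz2 (Submodule.smul_mem _ _ hy₀)
      have : x ∈ L ⊓ Λ j := Submodule.mem_inf.mpr ⟨hxL, hxj⟩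
      rw [hLj] at this
      simp only [Submodule.mem_bot] at this ⊢
      rw [← hxz, this, map_zero]
    have hu₀L' : u₀ ∈ L' ⊓ Λ i0 := by
      refine Submodule.mem_inf.mpr ⟨?_, hu₀Λ⟩
      refine Submodule.mem_map.mpr ⟨x₀, hx₀L, ?_⟩
      rw [hψapp, hfx₀, one_smul, hxy]
    have hu₀ne : u₀ ≠ 0 := by
      intro h
      exact hu₀N (h ▸ Submodule.zero_mem N)
    refine hmaxins i0 hi0r hi0T ⟨L', hL'dim, hL'j, ?_⟩
    intro i hi
    rcases Finset.mem_union.mp hi with h | h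
    · refine (Submodule.ne_bot_iff _).mpr ⟨v i, ?_, ((hv i (Finset.mem_union_left _ h)).2)⟩
      refine Submodule.mem_inf.mpr ⟨?_, ((hv i (Finset.mem_union_left _ h)).1).2⟩
      exact Submodule.mem_map.mpr ⟨v i, hvL i (Finset.mem_union_left _ h),
        hψfix i (Finset.mem_union_left _ h)⟩
    · rcases Finset.mem_insert.mp h with rfl | h
      · exact (Submodule.ne_bot_iff _).mpr ⟨u₀, hu₀L', hu₀ne⟩
      · refine (Submodule.ne_bot_iff _).mpr ⟨v i, ?_, ((hv i (Finset.mem_union_right _ h)).2)⟩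
        refine Submodule.mem_inf.mpr ⟨?_, ((hv i (Finset.mem_union_right _ h)).1).2⟩
        exact Submodule.mem_map.mpr ⟨v i, hvL i (Finset.mem_union_right _ h),
          hψfix i (Finset.mem_union_right _ h)⟩
end

section
/- Let $\Lambda_1,\dots,\Lambda_d\subset\mathbb{P}^n$ be $(k-1)$-planes and let $P\subset\mathbb{P}^n$ be a linear subspace of dimension $\alpha\ge 0$ with $P\cap\mathrm{Span}(\Lambda_1,\dots,\Lambda_d)=\emptyset$. Let $\pi_P:\mathbb{P}^n\dashrightarrow\mathbb{P}^{n-\alpha-1}$ be the projection from $P$ and set $\Gamma_i:=\pi_P(\Lambda_i)$. Then $\Lambda_1,\dots,\Lambda_d$ satisfy $\mathrm{SP}(n-k)$ in $\mathbb{P}^n$ if and only if $\Gamma_1,\dots,\Gamma_d$ satisfy $\mathrm{SP}(n-\alpha-1-k)$ in $\mathbb{P}^{n-\alpha-1}$. -/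
open Module Submodule

/-- Extend a subspace disjoint from `Γ` by `r` dimensions, staying disjoint from `Γ`. -/
lemma sp_aux_extend_disjoint {W : Type*} [AddCommGroup W] [Module ℂ W]
    [FiniteDimensional ℂ W] (Γ : Submodule ℂ W) :
    ∀ (r : ℕ) (M : Submodule ℂ W), M ⊓ Γ = ⊥ →
      finrank ℂ M + r + finrank ℂ Γ ≤ finrank ℂ W →
      ∃ L : Submodule ℂ W, M ≤ L ∧ finrank ℂ L = finrank ℂ M + r ∧ L ⊓ Γ = ⊥ := by
  intro r
  induction r with
  | zero => exact fun M h _ => ⟨M, le_rfl, rfl, h⟩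
  | succ r ih =>
    intro M hMΓ hle
    have hsup : finrank ℂ ↥(M ⊔ Γ) = finrank ℂ M + finrank ℂ Γ := by
      have h1 := Submodule.finrank_sup_add_finrank_inf_eq M Γ
      rw [hMΓ] at h1
      simpa using h1
    have hlt : finrank ℂ ↥(M ⊔ Γ) < finrank ℂ W := by omega
    have hne : M ⊔ Γ ≠ ⊤ := by
      intro h
      rw [h, finrank_top] at hlt
      omega
    obtain ⟨w, hw⟩ : ∃ w : W, w ∉ M ⊔ Γ := by
      by_contra h
      push_neg at h
      exact hne (Submodule.eq_top_iff'.mpr h)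
    have hw0 : w ≠ 0 := fun h => hw (h ▸ (M ⊔ Γ).zero_mem)
    have hwM : w ∉ M := fun h => hw (le_sup_left (a := M) (b := Γ) h)
    set M' := M ⊔ Submodule.span ℂ {w} with hM'
    have hMs : M ⊓ Submodule.span ℂ {w} = ⊥ := by
      rw [eq_bot_iff]
      rintro x ⟨hxM, hxs⟩
      obtain ⟨c, rfl⟩ := Submodule.mem_span_singleton.mp hxs
      rcases eq_or_ne c 0 with rfl | hc
      · simp
      · exact absurd (by simpa [hc] using M.smul_mem c⁻¹ hxM) hwM
    have hM'rank : finrank ℂ M' = finrank ℂ M + 1 := by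
      have h1 := Submodule.finrank_sup_add_finrank_inf_eq M (Submodule.span ℂ {w})
      rw [hMs, finrank_span_singleton hw0] at h1
      simpa [hM'] using h1
    have hM'Γ : M' ⊓ Γ = ⊥ := by
      rw [eq_bot_iff]
      rintro x ⟨hxM', hxΓ⟩
      obtain ⟨m, hm, y, hy, rfl⟩ := Submodule.mem_sup.mp hxM'
      obtain ⟨c, rfl⟩ := Submodule.mem_span_singleton.mp hy
      rcases eq_or_ne c 0 with rfl | hc
      · have : m ∈ M ⊓ Γ := ⟨hm, by simpa using hxΓ⟩
        rw [hMΓ] at this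
        simpa using this
      · exfalso
        apply hw
        have hmem : (m + c • w) - m ∈ M ⊔ Γ :=
          Submodule.sub_mem _ (le_sup_right (a := M) hxΓ) (le_sup_left (b := Γ) hm)
        have : c • w ∈ M ⊔ Γ := by simpa using hmem
        simpa [hc] using (M ⊔ Γ).smul_mem c⁻¹ this
    obtain ⟨L, hML, hLrank, hLΓ⟩ := ih M' hM'Γ (by omega)
    exact ⟨L, le_trans le_sup_left hML, by omega, hLΓ⟩

/-- If `P ≤ L`, then `finrank L = finrank (mkQ L) + finrank P`. -/
lemma sp_aux_finrank_map_mkQ {V : Type*} [AddCommGroup V] [Module ℂ V]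
    [FiniteDimensional ℂ V] (P L : Submodule ℂ V) (hPL : P ≤ L) :
    finrank ℂ L = finrank ℂ (L.map P.mkQ) + finrank ℂ P := by
  set f : L →ₗ[ℂ] V ⧸ P := P.mkQ.comp L.subtype with hf
  have hrange : LinearMap.range f = L.map P.mkQ := by
    rw [hf, LinearMap.range_comp, Submodule.range_subtype]
  have hker : LinearMap.ker f = Submodule.comap L.subtype P := by
    rw [hf, LinearMap.ker_comp, Submodule.ker_mkQ]
  have hkerrank : finrank ℂ (LinearMap.ker f) = finrank ℂ P := by
    rw [hker]
    exact LinearEquiv.finrank_eq (Submodule.comapSubtypeEquivOfLe hPL)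
  have h := LinearMap.finrank_range_add_finrank_ker f
  rw [hrange, hkerrank] at h
  omega

/-- If `A ⊓ P = ⊥`, then `mkQ` preserves the dimension of `A`. -/
lemma sp_aux_finrank_map_mkQ_disjoint {V : Type*} [AddCommGroup V] [Module ℂ V]
    [FiniteDimensional ℂ V] (P A : Submodule ℂ V) (hAP : A ⊓ P = ⊥) :
    finrank ℂ (A.map P.mkQ) = finrank ℂ A := by
  set f : A →ₗ[ℂ] V ⧸ P := P.mkQ.comp A.subtype with hf
  have hrange : LinearMap.range f = A.map P.mkQ := by
    rw [hf, LinearMap.range_comp, Submodule.range_subtype]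
  have hinj : Function.Injective f := by
    rw [← LinearMap.ker_eq_bot, eq_bot_iff]
    intro x hx
    have hx' : (x : V) ∈ P := by
      have : P.mkQ x = 0 := hx
      simpa [Submodule.Quotient.mk_eq_zero] using this
    have : (x : V) ∈ A ⊓ P := ⟨x.2, hx'⟩
    rw [hAP] at this
    have hx0 : (x : V) = 0 := by simpa using this
    exact (Submodule.mem_bot ℂ).mpr (Subtype.ext hx0)
  rw [← hrange]
  exact LinearMap.finrank_range_of_inj hinj

/-- Let `Λ₁,…,Λ_d ⊂ ℙⁿ` be `(k-1)`-planes and `P ⊂ ℙⁿ` a linear subspace of dimension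
`α ≥ 0` disjoint from `Span(Λ₁,…,Λ_d)`.  The projection `π_P : ℙⁿ ⇢ ℙ^{n-α-1}` from `P`
is modeled by the quotient map `V → V ⧸ P`, and `Γᵢ := π_P(Λᵢ)`.  Then `Λ₁,…,Λ_d`
satisfy `SP(n-k)` in `ℙⁿ` iff `Γ₁,…,Γ_d` satisfy `SP(n-α-1-k)` in `ℙ^{n-α-1}`. -/
theorem sp_iff_sp_projection {V : Type*} [AddCommGroup V] [Module ℂ V] [FiniteDimensional ℂ V]
    (n k d α : ℕ) (hk : 1 ≤ k) (hkn : k + α + 1 ≤ n)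
    (hV : Module.finrank ℂ V = n + 1)
    (Λ : ℕ → Submodule ℂ V)
    (hdim : ∀ i ∈ Finset.Icc 1 d, Module.finrank ℂ (Λ i) = k)
    (P : Submodule ℂ V) (hP : Module.finrank ℂ P = α + 1)
    (hPdisj : P ⊓ (⨆ i ∈ Finset.Icc 1 d, Λ i) = ⊥) :
    SP (n - k) (Finset.Icc 1 d) Λ ↔
      SP (n - α - 1 - k) (Finset.Icc 1 d) (fun i => (Λ i).map P.mkQ) := by
  set S := ⨆ i ∈ Finset.Icc 1 d, Λ i with hS
  have hΛS : ∀ i ∈ Finset.Icc 1 d, Λ i ≤ S := fun i hi => le_biSup _ hi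
  have hzero : ∀ i ∈ Finset.Icc 1 d, ∀ v ∈ Λ i, P.mkQ v = 0 → v = 0 := by
    intro i hi v hv hq
    have hvP : v ∈ P := by
      simpa [Submodule.Quotient.mk_eq_zero] using hq
    have hmem : v ∈ P ⊓ S := ⟨hvP, hΛS i hi hv⟩
    rw [hPdisj] at hmem
    simpa using hmem
  have hWrank : Module.finrank ℂ (V ⧸ P) = n - α := by
    have := Submodule.finrank_quotient_add_finrank P
    omega
  constructor
  · -- upstairs SP implies downstairs SP
    intro h j hj L₁ hL₁rank hL₁meet
    set L := Submodule.comap P.mkQ L₁ with hL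
    have hPL : P ≤ L := by
      intro x hx
      have hx0 : P.mkQ x = 0 := by
        rw [Submodule.mkQ_apply]
        exact (Submodule.Quotient.mk_eq_zero P).mpr hx
      exact Submodule.mem_comap.mpr (by rw [hx0]; exact L₁.zero_mem)
    have hmapL : L.map P.mkQ = L₁ := by
      rw [hL, Submodule.map_comap_eq, Submodule.range_mkQ, top_inf_eq]
    have hLrank : finrank ℂ L = (n - k) + 1 := by
      have := sp_aux_finrank_map_mkQ P L hPL
      rw [hmapL] at this
      omega
    have hLmeet : ∀ i ∈ Finset.Icc 1 d, i ≠ j → L ⊓ Λ i ≠ ⊥ := by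
      intro i hi hij
      obtain ⟨w, hw, hw0⟩ := Submodule.ne_bot_iff _ |>.mp (hL₁meet i hi hij)
      obtain ⟨v, hvΛ, rfl⟩ := hw.2
      refine Submodule.ne_bot_iff _ |>.mpr ⟨v, ⟨?_, hvΛ⟩, ?_⟩
      · exact Submodule.mem_comap.mpr hw.1
      · intro h0
        exact hw0 (by simp [h0])
    obtain ⟨v, ⟨hvL, hvΛj⟩, hv0⟩ :=
      Submodule.ne_bot_iff _ |>.mp (h j hj L hLrank hLmeet)
    refine Submodule.ne_bot_iff _ |>.mpr ⟨P.mkQ v, ⟨Submodule.mem_comap.mp hvL, ⟨v, hvΛj, rfl⟩⟩, ?_⟩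
    intro h0
    exact hv0 (hzero j hj v hvΛj h0)
  · -- downstairs SP implies upstairs SP
    intro h j hj L hLrank hLmeet
    by_contra hLj

    set Γj := (Λ j).map P.mkQ with hΓj
    set M := (L ⊓ S).map P.mkQ with hM
    -- M is disjoint from Γj
    have hMΓj : M ⊓ Γj = ⊥ := by
      rw [eq_bot_iff]
      rintro x ⟨hxM, hxΓ⟩
      obtain ⟨a, haN, rfl⟩ := hxM
      obtain ⟨b, hbΛ, hab⟩ := hxΓ
      have hsub : a - b ∈ P := by
        rw [Submodule.mkQ_apply, Submodule.mkQ_apply] at hab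
        exact (Submodule.Quotient.eq P).mp hab.symm
      have hsubS : a - b ∈ S := Submodule.sub_mem _ haN.2 (hΛS j hj hbΛ)
      have hab' : a = b := by
        have : a - b ∈ P ⊓ S := ⟨hsub, hsubS⟩
        rw [hPdisj] at this
        have := (Submodule.mem_bot ℂ).mp this
        linear_combination (norm := module) this
      have : a ∈ L ⊓ Λ j := ⟨haN.1, hab' ▸ hbΛ⟩
      rw [hLj] at this
      simp [(Submodule.mem_bot ℂ).mp this]
    have hΓjrank : finrank ℂ Γj = k := by
      rw [hΓj]
      rw [sp_aux_finrank_map_mkQ_disjoint P (Λ j) ?_]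
      · exact hdim j hj
      · rw [eq_bot_iff]
        rintro x ⟨hx1, hx2⟩
        have : x ∈ P ⊓ S := ⟨hx2, hΛS j hj hx1⟩
        rwa [hPdisj] at this
    have hMrank : finrank ℂ M + k ≤ n - α := by
      have h1 := Submodule.finrank_sup_add_finrank_inf_eq M Γj
      rw [hMΓj] at h1
      have h2 : finrank ℂ ↥(M ⊔ Γj) ≤ n - α := hWrank ▸ Submodule.finrank_le _
      simp only [finrank_bot] at h1
      omega
    obtain ⟨L₁, hML₁, hL₁rank, hL₁Γj⟩ :=
      sp_aux_extend_disjoint Γj (n - α - k - finrank ℂ M) M hMΓj (by omega)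
    have hL₁rank' : finrank ℂ L₁ = (n - α - 1 - k) + 1 := by omega
    have hL₁meet : ∀ i ∈ Finset.Icc 1 d, i ≠ j →
        L₁ ⊓ (Λ i).map P.mkQ ≠ ⊥ := by
      intro i hi hij
      obtain ⟨v, hv, hv0⟩ := Submodule.ne_bot_iff _ |>.mp (hLmeet i hi hij)
      refine Submodule.ne_bot_iff _ |>.mpr ⟨P.mkQ v, ⟨?_, ⟨v, hv.2, rfl⟩⟩, ?_⟩
      · exact hML₁ ⟨v, ⟨hv.1, hΛS i hi hv.2⟩, rfl⟩
      · intro h0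
        exact hv0 (hzero i hi v hv.2 h0)
    exact h j hj L₁ hL₁rank' hL₁meet hL₁Γj
end

section
/- Let $\Lambda_1,\dots,\Lambda_d\subset\mathbb{P}^n$ be $(k-1)$-planes satisfying $\mathrm{SP}(n-k)$, and let $P\subset\mathbb{P}^n$ be a linear subspace of dimension $\alpha\ge 0$. Suppose $2\le r\le d-1$ is such that $P\cap\Lambda_i=\emptyset$ for $i=1,\dots,r$ and $P\cap\Lambda_i\neq\emptyset$ for $i=r+1,\dots,d$. Then the images $\Gamma_i:=\pi_P(\Lambda_i)\subset\mathbb{P}^{n-\alpha-1}$, for $i=1,\dots,r$, satisfy $\mathrm{SP}(n-\alpha-1-k)$. -/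
lemma finrank_comap_mkQ {V : Type*} [AddCommGroup V] [Module ℂ V] [FiniteDimensional ℂ V]
    (P : Submodule ℂ V) (L : Submodule ℂ (V ⧸ P)) :
    Module.finrank ℂ (L.comap P.mkQ) = Module.finrank ℂ L + Module.finrank ℂ P := by
  set W := L.comap P.mkQ
  have hPW : P ≤ W := fun x hx => by
    simp [W, Submodule.mem_comap, (Submodule.Quotient.mk_eq_zero P).mpr hx]
  have hmap : W.map P.mkQ = L := by
    rw [Submodule.map_comap_eq, Submodule.range_mkQ, top_inf_eq]
  have h1 := LinearMap.finrank_range_add_finrank_ker (P.mkQ.domRestrict W)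
  rw [LinearMap.range_domRestrict] at h1
  have hker : LinearMap.ker (P.mkQ.domRestrict W) = P.comap W.subtype := by
    ext x; simp [LinearMap.mem_ker, Submodule.Quotient.mk_eq_zero]
  rw [hker, hmap, (Submodule.comapSubtypeEquivOfLe hPW).finrank_eq] at h1
  exact h1.symm

/-- Let `Λ₁,…,Λ_d ⊂ ℙⁿ` be `(k-1)`-planes satisfying `SP(n-k)` and `P ⊂ ℙⁿ` a linear
subspace of dimension `α ≥ 0` with `P ∩ Λᵢ = ∅` for `i = 1,…,r` and `P ∩ Λᵢ ≠ ∅` for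
`i = r+1,…,d` (where `2 ≤ r ≤ d-1`).  Then the projections
`Γᵢ := π_P(Λᵢ) ⊂ ℙ^{n-α-1}`, `i = 1,…,r`, satisfy `SP(n-α-1-k)`. -/
theorem sp_projection_of_sp {V : Type*} [AddCommGroup V] [Module ℂ V] [FiniteDimensional ℂ V]
    (n k d r α : ℕ) (hk : 1 ≤ k) (hkn : k + α + 1 ≤ n) (hr : 2 ≤ r) (hrd : r + 1 ≤ d)
    (hV : Module.finrank ℂ V = n + 1)
    (Λ : ℕ → Submodule ℂ V)
    (hdim : ∀ i ∈ Finset.Icc 1 d, Module.finrank ℂ (Λ i) = k)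
    (hSP : SP (n - k) (Finset.Icc 1 d) Λ)
    (P : Submodule ℂ V) (hP : Module.finrank ℂ P = α + 1)
    (hPdisj : ∀ i ∈ Finset.Icc 1 r, P ⊓ Λ i = ⊥)
    (hPmeet : ∀ i ∈ Finset.Icc (r + 1) d, P ⊓ Λ i ≠ ⊥) :
    SP (n - α - 1 - k) (Finset.Icc 1 r) (fun i => (Λ i).map P.mkQ) := by
  intro j hj L hL hmeet
  set W := L.comap P.mkQ with hW
  have hPW : P ≤ W := fun x hx => by
    simp [hW, Submodule.mem_comap, (Submodule.Quotient.mk_eq_zero P).mpr hx]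
  have hWdim : Module.finrank ℂ W = (n - k) + 1 := by
    rw [finrank_comap_mkQ, hL, hP]
    omega
  have hjd : j ∈ Finset.Icc 1 d := by
    simp only [Finset.mem_Icc] at hj ⊢; omega
  -- W meets every Λ i, i ≠ j
  have hWmeet : ∀ i ∈ Finset.Icc 1 d, i ≠ j → W ⊓ Λ i ≠ ⊥ := by
    intro i hi hij
    simp only [Finset.mem_Icc] at hi
    by_cases hir : i ≤ r
    · -- i ≤ r: use hmeet
      have hi' : i ∈ Finset.Icc 1 r := by simp only [Finset.mem_Icc]; omega
      have := hmeet i hi' hij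
      rw [Submodule.ne_bot_iff] at this ⊢
      obtain ⟨x, hx, hx0⟩ := this
      simp only [Submodule.mem_inf] at hx
      obtain ⟨hxL, hxΛ⟩ := hx
      obtain ⟨w, hw, hwx⟩ := hxΛ
      refine ⟨w, ?_, ?_⟩
      · simp only [Submodule.mem_inf, hW, Submodule.mem_comap]
        exact ⟨by rw [hwx]; exact hxL, hw⟩
      · rintro rfl; simp at hwx; exact hx0 hwx.symm
    · -- i > r: P ⊓ Λ i ≠ ⊥ and P ≤ W
      have := hPmeet i (by simp only [Finset.mem_Icc]; omega)
      intro hbot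
      exact this (le_bot_iff.mp (hbot ▸ inf_le_inf_right (Λ i) hPW))
  have hWj := hSP j hjd W hWdim hWmeet
  rw [Submodule.ne_bot_iff] at hWj ⊢
  obtain ⟨w, hw, hw0⟩ := hWj
  simp only [Submodule.mem_inf, hW, Submodule.mem_comap] at hw
  refine ⟨P.mkQ w, ?_, ?_⟩
  · exact Submodule.mem_inf.mpr ⟨hw.1, Submodule.mem_map_of_mem hw.2⟩
  · intro h0
    have hwP : w ∈ P := (Submodule.Quotient.mk_eq_zero P).mp h0
    have : w ∈ P ⊓ Λ j := Submodule.mem_inf.mpr ⟨hwP, hw.2⟩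
    rw [hPdisj j hj] at this
    exact hw0 this
end

section
/- Let $\Lambda_1,\dots,\Lambda_d\subset\mathbb{P}^n$ be $(k-1)$-planes satisfying $\mathrm{SP}(n-k)$, and let $2\le r\le\min\{d-2,n-k+1\}$ be such that for a general point $p\in\Lambda_d$ one has $p\notin\Lambda_i$ for $i=1,\dots,r$ and the projections $\Gamma_i:=\pi_p(\Lambda_i)\subset\mathbb{P}^{n-1}$, $i=1,\dots,r$, satisfy $\mathrm{SP}(n-k-1)$. Then either (A) $\Lambda_d\subseteq\mathrm{Span}(\Lambda_1,\dots,\Lambda_r)$, or (B) $\Lambda_1,\dots,\Lambda_r$ satisfy $\mathrm{SP}(n-k)$. -/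
/-!
Suppose `SP(n-k)` fails for `Λ₁,…,Λ_r`: some `L` of projective dimension `n-k` meets every
`Λᵢ` (`i ≠ j`) but misses `Λ_j`, so `V = L ⊕ Λ_j` for dimension reasons. Let `S ≤ L` be
spanned by the intersections `L ∩ Λᵢ`, `i ≠ j`; then `S + Λ_j ⊆ Span(Λ₁,…,Λ_r)`. Write a
general `p ∈ Λ_d` as `p = a + b` with `a ∈ L`, `b ∈ Λ_j`. If `a ∉ S`, pick a hyperplane `H`
of `L` containing `S` but not `a`. Its projection from `p` is an `(n-k-1)`-plane meeting every
`π_p(Λᵢ)`, `i ≠ j`, so by `SP(n-k-1)` it meets `π_p(Λ_j)`; lifting a common point and using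
`L ∩ Λ_j = 0` puts `a` in `H`, a contradiction. Hence every general `p` lies in the span, and
so does `Λ_d`, which over an infinite field is not a finite union of proper subspaces.
-/

open Module

namespace Submodule

variable {K V : Type*} [Field K] [AddCommGroup V] [Module K V]

theorem le_of_forall_generic_mem [Infinite K] {U W : Submodule K V}
    (T : Finset (Submodule K V)) (hT : ∀ X ∈ T, ¬ U ≤ X)
    (h : ∀ u ∈ U, u ≠ 0 → (∀ X ∈ T, u ∉ X) → u ∈ W) : U ≤ W := by
  classical
  let s : Finset (Submodule K U) := insert (W.comap U.subtype) (T.image (·.comap U.subtype))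
  have hcover : ⋃ X ∈ s, (X : Set U) = Set.univ := by
    refine Set.eq_univ_of_forall fun u => Set.mem_iUnion₂.mpr ?_
    by_cases huW : (u : V) ∈ W
    · exact ⟨_, Finset.mem_insert_self _ _, huW⟩
    obtain ⟨X, hX, huX⟩ : ∃ X ∈ T, (u : V) ∈ X := by
      by_contra! hu
      exact huW (h u u.2 (fun hu0 => huW (hu0 ▸ W.zero_mem)) hu)
    exact ⟨_, Finset.mem_insert_of_mem (Finset.mem_image_of_mem _ hX), huX⟩
  rcases Finset.mem_insert.mp (Subspace.top_mem_of_biUnion_eq_univ hcover) with hW | hX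
  · exact comap_subtype_eq_top.mp hW.symm
  · obtain ⟨X, hX, hXtop⟩ := Finset.mem_image.mp hX
    exact absurd (comap_subtype_eq_top.mp hXtop) (hT X hX)

theorem exists_hyperplane_between_notMem {S L : Submodule K V} [FiniteDimensional K L] {a : V}
    (hSL : S ≤ L) (haL : a ∈ L) (haS : a ∉ S) :
    ∃ H : Submodule K V, S ≤ H ∧ H ≤ L ∧ a ∉ H ∧ finrank K H + 1 = finrank K L := by
  obtain ⟨f, hfa, hfS⟩ := S.exists_dual_map_eq_bot_of_notMem haS inferInstance
  have hf : f.domRestrict L ≠ 0 := fun h0 => hfa (LinearMap.congr_fun h0 ⟨a, haL⟩)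
  refine ⟨L ⊓ LinearMap.ker f, le_inf hSL (LinearMap.le_ker_iff_map.mpr hfS), inf_le_left,
    fun ha => hfa ha.2, ?_⟩
  rw [← map_comap_subtype, finrank_map_subtype_eq, ← LinearMap.ker_domRestrict]
  exact Module.Dual.finrank_ker_add_one_of_ne_zero hf

theorem finrank_map_mkQ_span_singleton {p : V} {L : Submodule K V} (hp : p ∉ L) :
    finrank K (L.map (K ∙ p).mkQ) = finrank K L := by
  rw [← LinearMap.range_domRestrict]
  exact LinearMap.finrank_range_of_inj <| LinearMap.injective_domRestrict_iff.mpr <| by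
    rw [ker_mkQ]; exact disjoint_span_singleton_of_notMem hp

theorem map_mkQ_span_singleton_ne_bot {p : V} {X : Submodule K V} (hp : p ∉ X) (hX : X ≠ ⊥) :
    X.map (K ∙ p).mkQ ≠ ⊥ := fun h =>
  hX <| (disjoint_span_singleton_of_notMem hp).eq_bot_of_le <| by
    rwa [← LinearMap.le_ker_iff_map, ker_mkQ] at h

theorem mem_of_add_mem_of_disjoint {L M H : Submodule K V} (hLM : Disjoint L M) (hHL : H ≤ L)
    {a b : V} (ha : a ∈ L) (hb : b ∈ M) (hab : a + b ∈ H) : a ∈ H := by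
  have hb0 : b = 0 :=
    disjoint_def.mp hLM b (by simpa using L.sub_mem (hHL hab) ha) hb
  simpa [hb0] using hab

theorem mem_of_map_mkQ_inf_ne_bot {L M H : Submodule K V} (hLM : Disjoint L M) (hHL : H ≤ L)
    {a b : V} (ha : a ∈ L) (hb : b ∈ M)
    (h : H.map (K ∙ (a + b)).mkQ ⊓ M.map (K ∙ (a + b)).mkQ ≠ ⊥) :
    a ∈ H := by
  obtain ⟨w, hw, hw0⟩ := (Submodule.ne_bot_iff _).mp h
  obtain ⟨⟨x, hxH, rfl⟩, ⟨y, hyM, hxy⟩⟩ := mem_inf.mp hw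
  obtain ⟨c, hc⟩ := mem_span_singleton.mp <| (Quotient.eq _).mp hxy.symm
  rcases eq_or_ne c 0 with rfl | hc0
  · have hxy : x = y := by simpa [sub_eq_zero] using hc.symm
    have hx0 : x = 0 := disjoint_def.mp hLM x (hHL hxH) (hxy ▸ hyM)
    exact absurd (by simp [hx0]) hw0
  have hcax : c • a - x = 0 := by
    refine disjoint_def.mp hLM _ (L.sub_mem (L.smul_mem c ha) (hHL hxH)) ?_
    have : c • a - x = -(y + c • b) := by linear_combination (norm := module) hc
    rw [this]; exact M.neg_mem (M.add_mem hyM (M.smul_mem c hb))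
  exact (smul_mem_iff H hc0).mp (sub_eq_zero.mp hcax ▸ hxH)

end Submodule

open Submodule in
theorem sp_of_general_projection_general {V : Type*} [AddCommGroup V] [Module ℂ V]
    [FiniteDimensional ℂ V]
    (n k d r : ℕ) (hkn : k ≤ n) (hr : 2 ≤ r) (hrd : r + 2 ≤ d)
    (hrn : r ≤ n - k + 1)
    (hV : Module.finrank ℂ V = n + 1)
    (Λ : ℕ → Submodule ℂ V)
    (hdim : ∀ i ∈ Finset.Icc 1 d, Module.finrank ℂ (Λ i) = k)
    (T : Finset (Submodule ℂ V)) (hT : ∀ W ∈ T, ¬ Λ d ≤ W)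
    (hgen : ∀ v : V, v ∈ Λ d → v ≠ 0 → (∀ W ∈ T, v ∉ W) →
      (∀ i ∈ Finset.Icc 1 r, v ∉ Λ i) ∧
      SP (n - k - 1) (Finset.Icc 1 r)
        (fun i => (Λ i).map (Submodule.span ℂ {v}).mkQ)) :
    Λ d ≤ (⨆ i ∈ Finset.Icc 1 r, Λ i) ∨ SP (n - k) (Finset.Icc 1 r) Λ := by
  refine or_iff_not_imp_right.mpr fun hB => ?_
  unfold SP at hB
  push Not at hB
  obtain ⟨j, hj, L, hL, hmeet, hLj⟩ := hB
  have hLΛj : Disjoint L (Λ j) := disjoint_iff.mpr hLj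
  have hΛj : finrank ℂ (Λ j) = k :=
    hdim j (Finset.Icc_subset_Icc_right (by omega) hj)
  have hsup : L ⊔ Λ j = ⊤ := by
    refine eq_top_of_finrank_eq ?_
    have := finrank_sup_add_finrank_inf_eq L (Λ j)
    rw [hLj, finrank_bot, hL, hΛj] at this
    omega
  let S := ⨆ i ∈ (Finset.Icc 1 r).erase j, L ⊓ Λ i
  have hSL : S ≤ L := iSup₂_le fun _ _ => inf_le_left
  have hSW : S ≤ ⨆ i ∈ Finset.Icc 1 r, Λ i := iSup₂_le fun i hi =>
    inf_le_right.trans (le_biSup Λ (Finset.mem_of_mem_erase hi))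
  refine le_of_forall_generic_mem T hT fun p hpd hp0 hpT => ?_
  obtain ⟨hpΛ, hΓ⟩ := hgen p hpd hp0 hpT
  obtain ⟨a, ha, b, hb, rfl⟩ := mem_sup.mp (hsup ▸ mem_top : p ∈ L ⊔ Λ j)
  suffices haS : a ∈ S from add_mem (hSW haS) (le_biSup Λ hj hb)
  by_contra haS
  obtain ⟨H, hSH, hHL, haH, hH⟩ := exists_hyperplane_between_notMem hSL ha haS
  have hpH : a + b ∉ H := fun h => haH (mem_of_add_mem_of_disjoint hLΛj hHL ha hb h)
  refine haH (mem_of_map_mkQ_inf_ne_bot hLΛj hHL ha hb (hΓ j hj _ ?_ fun i hi hij => ?_))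
  · rw [finrank_map_mkQ_span_singleton hpH]
    omega
  · refine ne_bot_of_le_ne_bot
      (map_mkQ_span_singleton_ne_bot (fun h => hpΛ i hi (mem_inf.mp h).2) (hmeet i hi hij)) ?_
    have hiS : L ⊓ Λ i ≤ S := le_biSup (fun i => L ⊓ Λ i) (Finset.mem_erase.mpr ⟨hij, hi⟩)
    exact le_inf (map_mono (hiS.trans hSH)) (map_mono inf_le_right)

/-- Let `Λ₁,…,Λ_d ⊂ ℙⁿ` be `(k-1)`-planes satisfying `SP(n-k)`, and let
`2 ≤ r ≤ min{d-2, n-k+1}` be such that for a *general* point `p ∈ Λ_d` (i.e. every point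
of `Λ_d` avoiding a fixed finite collection `T` of subspaces none of which contains `Λ_d`)
one has `p ∉ Λᵢ` for `i = 1,…,r` and the projections `Γᵢ := π_p(Λᵢ) ⊂ ℙ^{n-1}` satisfy
`SP(n-k-1)` (projection from `p` being modeled by the quotient map `V → V ⧸ ℂp`).
Then either (A) `Λ_d ⊆ Span(Λ₁,…,Λ_r)`, or (B) `Λ₁,…,Λ_r` satisfy `SP(n-k)`. -/
theorem sp_of_general_projection {V : Type*} [AddCommGroup V] [Module ℂ V]
    [FiniteDimensional ℂ V]
    (n k d r : ℕ) (hk : 1 ≤ k) (hkn : k ≤ n) (hr : 2 ≤ r) (hrd : r + 2 ≤ d)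
    (hrn : r ≤ n - k + 1)
    (hV : Module.finrank ℂ V = n + 1)
    (Λ : ℕ → Submodule ℂ V)
    (hdim : ∀ i ∈ Finset.Icc 1 d, Module.finrank ℂ (Λ i) = k)
    (hSP : SP (n - k) (Finset.Icc 1 d) Λ)
    (T : Finset (Submodule ℂ V)) (hT : ∀ W ∈ T, ¬ Λ d ≤ W)
    (hgen : ∀ v : V, v ∈ Λ d → v ≠ 0 → (∀ W ∈ T, v ∉ W) →
      (∀ i ∈ Finset.Icc 1 r, v ∉ Λ i) ∧
      SP (n - k - 1) (Finset.Icc 1 r)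
        (fun i => (Λ i).map (Submodule.span ℂ {v}).mkQ)) :
    Λ d ≤ (⨆ i ∈ Finset.Icc 1 r, Λ i) ∨ SP (n - k) (Finset.Icc 1 r) Λ :=
  sp_of_general_projection_general n k d r hkn hr hrd hrn hV Λ hdim T hT hgen
end

section
/- Let $\Lambda_1,\dots,\Lambda_d\subset\mathbb{P}^{g-1}$ be $(k-1)$-planes in special position with respect to $(g-1-k)$-planes, where each $\Lambda_j$ is spanned by $k$ points of a canonically embedded non-hyperelliptic curve $C\subset\mathbb{P}^{g-1}$ in general position. Let $A$ be a finite set of points of $C$ lying on the planes such that $A\cap\Lambda_j=\emptyset$ for exactly one index $j$ and $A\cap\Lambda_i\neq\emptyset$ for all $i\neq j$, and such that $A$ is disjoint from the $k$ spanning points of $\Lambda_j$. Then $|A|\ge\mathrm{gon}(C)-k$. -/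
open Module Submodule

/-- The canonical model `C ⊂ ℙ^{g-1}` of a smooth non-hyperelliptic curve of genus `g`,
with `lin D` the dimension of the complete linear series of a reduced divisor `D`,
the geometric Riemann–Roch theorem, and the fact that a `𝔤ʳ_s` with `r ≥ 1` has
degree `s ≥ gon(C) + r - 1`. -/
structure CanonicallyEmbeddedCurve (g : ℕ) where
  carrier : Set (Fin g → ℂ)
  zero_not_mem : (0 : Fin g → ℂ) ∉ carrier
  gonality : ℕ
  lin : Finset (Fin g → ℂ) → ℤ
  geomRR : ∀ D : Finset (Fin g → ℂ), ↑D ⊆ carrier →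
    lin D = (D.card : ℤ) -
      (Module.finrank ℂ (Submodule.span ℂ (D : Set (Fin g → ℂ))) : ℤ)
  series_ge_gon : ∀ D : Finset (Fin g → ℂ), ↑D ⊆ carrier → 1 ≤ lin D →
    (gonality : ℤ) + lin D - 1 ≤ (D.card : ℤ)

/-- Extend a subspace `M` meeting `N` trivially to a subspace `L` of codimension
`finrank N` still meeting `N` trivially. -/
lemma exists_ext {V : Type*} [AddCommGroup V] [Module ℂ V] [FiniteDimensional ℂ V]
    (M N : Submodule ℂ V) (h : M ⊓ N = ⊥) :
    ∃ L : Submodule ℂ V, M ≤ L ∧ L ⊓ N = ⊥ ∧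
      finrank ℂ L + finrank ℂ N = finrank ℂ V := by
  obtain ⟨W, hW⟩ := Submodule.exists_isCompl (M ⊔ N)
  have hMW : M ⊓ W = ⊥ := by
    rw [Submodule.eq_bot_iff]
    intro x hx
    obtain ⟨hx1, hx2⟩ := Submodule.mem_inf.mp hx
    have : x ∈ (M ⊔ N) ⊓ W := Submodule.mem_inf.mpr ⟨le_sup_left (b := N) hx1, hx2⟩
    rw [hW.inf_eq_bot] at this
    exact this
  refine ⟨M ⊔ W, le_sup_left, ?_, ?_⟩
  · rw [Submodule.eq_bot_iff]
    intro x hx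
    obtain ⟨hx1, hx2⟩ := Submodule.mem_inf.mp hx
    obtain ⟨m, hm, w, hw, rfl⟩ := Submodule.mem_sup.mp hx1
    have hwmem : w ∈ (M ⊔ N) ⊓ W := by
      refine Submodule.mem_inf.mpr ⟨?_, hw⟩
      have : (m + w) - m ∈ M ⊔ N := sub_mem (le_sup_right (a := M) hx2) (le_sup_left (b := N) hm)
      simpa using this
    rw [hW.inf_eq_bot] at hwmem
    have hw0 : w = 0 := hwmem
    subst hw0
    have : m + 0 ∈ M ⊓ N := Submodule.mem_inf.mpr ⟨by simpa using hm, hx2⟩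
    rw [h] at this
    simpa using this
  · have e1 := Submodule.finrank_sup_add_finrank_inf_eq M W
    have e2 := Submodule.finrank_sup_add_finrank_inf_eq M N
    have e3 := Submodule.finrank_add_eq_of_isCompl hW
    rw [hMW] at e1
    rw [h] at e2
    simp only [finrank_bot, add_zero] at e1 e2
    omega

/-- Let `Λ₁,…,Λ_d ⊂ ℙ^{g-1}` be `(k-1)`-planes in special position with respect to
`(g-1-k)`-planes, each `Λⱼ` spanned by `k` points of a canonically embedded
non-hyperelliptic curve `C ⊂ ℙ^{g-1}` in general position.  Let `A` be a finite set of
points of `C` with `A ∩ Λⱼ = ∅` for exactly one index `j` and `A ∩ Λᵢ ≠ ∅` for all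
`i ≠ j`, and with `A` disjoint from the `k` spanning points of `Λⱼ`.
Then `|A| ≥ gon(C) - k`. -/
theorem claim_card_ge_gon_sub (g k d : ℕ) (hk : 1 ≤ k) (hkg : k + 1 ≤ g) (hd : 2 ≤ d)
    (X : CanonicallyEmbeddedCurve g)
    (p : ℕ → Fin k → (Fin g → ℂ))
    (hp : ∀ i ∈ Finset.Icc 1 d, ∀ m : Fin k, p i m ∈ X.carrier)
    (Λ : ℕ → Submodule ℂ (Fin g → ℂ))
    (hΛ : ∀ i ∈ Finset.Icc 1 d, Λ i = Submodule.span ℂ (Set.range (p i)))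
    (hgenpos : ∀ i ∈ Finset.Icc 1 d, Module.finrank ℂ (Λ i) = k)
    (hSP : SP (g - 1 - k) (Finset.Icc 1 d) Λ)
    (A : Finset (Fin g → ℂ)) (hA : ↑A ⊆ X.carrier)
    (j : ℕ) (hj : j ∈ Finset.Icc 1 d)
    (hAj : ∀ a ∈ A, a ∉ Λ j)
    (hAi : ∀ i ∈ Finset.Icc 1 d, i ≠ j → ∃ a ∈ A, a ∈ Λ i)
    (hApj : ∀ m : Fin k, p j m ∉ A) :
    (X.gonality : ℤ) - k ≤ (A.card : ℤ) := by
  classical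
  have hg : finrank ℂ (Fin g → ℂ) = g := by simp
  set Pj : Finset (Fin g → ℂ) := Finset.image (p j) Finset.univ with hPjdef
  have hcoe : (Pj : Set (Fin g → ℂ)) = Set.range (p j) := by
    simp [hPjdef]
  have hΛj : Λ j = Submodule.span ℂ (Pj : Set (Fin g → ℂ)) := by
    rw [hΛ j hj, hcoe]
  have hPk : Pj.card = k := by
    have h1 : Pj.card ≤ k := le_trans Finset.card_image_le (by simp)
    have h2 : finrank ℂ (Submodule.span ℂ (Pj : Set (Fin g → ℂ))) ≤ Pj.card :=
      finrank_span_finset_le_card Pj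
    rw [← hΛj, hgenpos j hj] at h2
    omega
  have hdisj : Disjoint A Pj := by
    rw [Finset.disjoint_right]
    intro a ha
    obtain ⟨m, -, rfl⟩ := Finset.mem_image.mp ha
    exact hApj m
  set D : Finset (Fin g → ℂ) := A ∪ Pj with hDdef
  have hDcard : D.card = A.card + k := by
    rw [hDdef, Finset.card_union_of_disjoint hdisj, hPk]
  have hDsub : ↑D ⊆ X.carrier := by
    rw [hDdef]
    intro x hx
    rcases Finset.mem_union.mp (by exact_mod_cast hx) with h | h
    · exact hA h
    · obtain ⟨m, -, rfl⟩ := Finset.mem_image.mp h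
      exact hp j hj m
  set M : Submodule ℂ (Fin g → ℂ) := Submodule.span ℂ (A : Set (Fin g → ℂ)) with hMdef
  have hspanD : Submodule.span ℂ (D : Set (Fin g → ℂ)) = M ⊔ Λ j := by
    rw [hDdef, Finset.coe_union, Submodule.span_union, hMdef, hΛj]
  have hfM : finrank ℂ M ≤ A.card := finrank_span_finset_le_card A
  have hkey : finrank ℂ ↥(M ⊔ Λ j) + 1 ≤ A.card + k := by
    by_cases h0 : M ⊓ Λ j = ⊥
    · exfalso
      obtain ⟨L, hML, hLΛ, hLrank⟩ := exists_ext M (Λ j) h0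
      have hLrank' : finrank ℂ L = g - 1 - k + 1 := by
        rw [hgenpos j hj, hg] at hLrank
        omega
      refine hSP j hj L hLrank' ?_ hLΛ
      intro i hi hij
      obtain ⟨a, haA, haΛ⟩ := hAi i hi hij
      have haL : a ∈ L := hML (Submodule.subset_span haA)
      have ha0 : a ≠ 0 := by
        intro h
        exact X.zero_not_mem (h ▸ hA haA)
      intro hbot
      have : a ∈ L ⊓ Λ i := Submodule.mem_inf.mpr ⟨haL, haΛ⟩
      rw [hbot] at this
      exact ha0 this
    · have e := Submodule.finrank_sup_add_finrank_inf_eq M (Λ j)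
      have hpos : 1 ≤ finrank ℂ ↥(M ⊓ Λ j) := by
        rcases Nat.eq_zero_or_pos (finrank ℂ ↥(M ⊓ Λ j)) with h | h
        · exact absurd (Submodule.finrank_eq_zero.mp h) h0
        · exact h
      rw [hgenpos j hj] at e
      omega
  have hRR := X.geomRR D hDsub
  rw [hspanD] at hRR
  have hlin : 1 ≤ X.lin D := by
    rw [hRR]
    have := hDcard
    push_cast [hDcard]
    omega
  have hgon := X.series_ge_gon D hDsub hlin
  rw [hRR] at hgon
  push_cast [hDcard] at hgon
  omega
end
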